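/- Let k ≥ 1 be an integer. A proper finite propositional logic program P has a stable model of cardinality k if and only if there exists a set A ⊆ At(P) with |A| = k − 1 such that P has an A-based stable model. -/

import Mathlib

open scoped Classical

noncomputable section

/-- A propositional logic program rule: a head atom, a finite positive body and a
finite negative body. -/
structure LPRule (α : Type) where
  head : α
  pos : Finset α
  neg : Finset α
deriving DecidableEq

/-- A logic program is a finite set of rules. -/
abbrev LProgram (α : Type) := Finset (LPRule α)

variable {α : Type} [DecidableEq α]

/-- `horn r`: the Horn rule with the same head and positive body as `r`
and empty negative body. -/
def LPRule.horn (r : LPRule α) : LPRule α := ⟨r.head, r.pos, ∅⟩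

/-- A rule `r` is proper if `h(r) ∉ b⁺(r)` and `b⁺(r) ∩ b⁻(r) = ∅`. -/
def LPRule.proper (r : LPRule α) : Prop := r.head ∉ r.pos ∧ r.pos ∩ r.neg = ∅

/-- `At(P)`: the set of atoms occurring in `P`. -/
def atomsP (P : LProgram α) : Finset α := P.sup (fun r => insert r.head (r.pos ∪ r.neg))

/-- `h(P)`: the set of heads of rules of `P`. -/
def headsP (P : LProgram α) : Finset α := P.image LPRule.head

/-- `Neg(P)`: the set of atoms occurring negated in `P`. -/
def negP (P : LProgram α) : Finset α := P.sup LPRule.neg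

/-- The least model of a (Horn) program `Q`, given as a set of rules (negative bodies
are ignored; Horn rules have empty negative bodies): the least set `M` of atoms such
that `h(r) ∈ M` whenever `r ∈ Q` and `b⁺(r) ⊆ M`. -/
def LM (Q : Set (LPRule α)) : Set α :=
  ⋂₀ {M : Set α | ∀ r ∈ Q, (↑r.pos : Set α) ⊆ M → r.head ∈ M}

/-- The reduct `P^S`: delete every rule whose negative body meets `S` and remove the
negative bodies of the remaining rules. -/
def reduct (P : LProgram α) (S : Set α) : Set (LPRule α) :=
  LPRule.horn '' {r | r ∈ P ∧ (↑r.neg : Set α) ∩ S = ∅}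

/-- `M` is a stable model of `P` if `M = LM (P^M)`. -/
def isStable (P : LProgram α) (M : Set α) : Prop :=
  M = LM (reduct P M)

/-- `P(A)`: the rules `r` of `P` with `b⁻(r) ∩ A = ∅` and `b⁺(r) ⊆ A`. -/
def progA (P : LProgram α) (A : Set α) : LProgram α :=
  P.filter (fun r => (↑r.pos : Set α) ⊆ A ∧ (↑r.neg : Set α) ∩ A = ∅)

/-- `M` is an `A`-based stable model of `P`: `M` is a stable model of `P` of the form
`A ∪ {a}` for some atom `a ∉ A`, and `M ⊆ LM (P(A)^M)`. -/
def isABased (P : LProgram α) (A M : Set α) : Prop :=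
  isStable P M ∧ ∃ a, a ∉ A ∧ M = A ∪ {a} ∧ M ⊆ LM (reduct (progA P A) M)

/-!
A finite stable model `M` is the least model of the Horn program `P^M`, which is reached by
iterating the immediate consequence operator from `∅`. Some iterate equals `M` and the one before
it does not; pick `a` in `M` outside that previous iterate. All steps up to the last one use only
rules whose positive bodies lie in `M \ {a}`, and such rules of `P^M` come from `P(M \ {a})`
because their negative bodies avoid `M`. Hence `LM (P(M \ {a})^M)` already contains `M`.
-/

section HornProgram

omit [DecidableEq α]

def immConsequence (Q : Set (LPRule α)) (X : Set α) : Set α :=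
  {a | ∃ r ∈ Q, (↑r.pos : Set α) ⊆ X ∧ r.head = a}

theorem immConsequence_mono (Q : Set (LPRule α)) : Monotone (immConsequence Q) :=
  fun _ _ hXY _ ⟨r, hr, hpos, hhead⟩ => ⟨r, hr, hpos.trans hXY, hhead⟩

theorem LM_subset_of_immConsequence_subset {Q : Set (LPRule α)} {X : Set α}
    (h : immConsequence Q X ⊆ X) : LM Q ⊆ X :=
  Set.sInter_subset_of_mem fun r hr hpos => h ⟨r, hr, hpos, rfl⟩

theorem immConsequence_LM_subset (Q : Set (LPRule α)) : immConsequence Q (LM Q) ⊆ LM Q := by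
  rintro _ ⟨r, hr, hpos, rfl⟩ M hM
  exact hM r hr (hpos.trans (Set.sInter_subset_of_mem hM))

theorem LM_mono {Q Q' : Set (LPRule α)} (h : Q ⊆ Q') : LM Q ⊆ LM Q' :=
  LM_subset_of_immConsequence_subset fun _ ⟨r, hr, hpos, hhead⟩ =>
    immConsequence_LM_subset Q' ⟨r, h hr, hpos, hhead⟩

theorem monotone_iterate_immConsequence (Q : Set (LPRule α)) :
    Monotone fun n => (immConsequence Q)^[n] ∅ :=
  (immConsequence_mono Q).monotone_iterate_of_le_map (Set.empty_subset _)

theorem iterate_immConsequence_subset_LM (Q : Set (LPRule α)) (n : ℕ) :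
    (immConsequence Q)^[n] ∅ ⊆ LM Q := by
  induction n with
  | zero => exact Set.empty_subset _
  | succ n ih =>
    rw [Function.iterate_succ_apply']
    exact (immConsequence_mono Q ih).trans (immConsequence_LM_subset Q)

theorem exists_iterate_immConsequence_of_subset_iUnion (Q : Set (LPRule α)) {s : Finset α}
    (hs : ↑s ⊆ ⋃ n, (immConsequence Q)^[n] ∅) : ∃ n, ↑s ⊆ (immConsequence Q)^[n] ∅ :=
  (monotone_iterate_immConsequence Q).directed_le.exists_mem_subset_of_finset_subset_biUnion hs

theorem LM_subset_iUnion_iterate_immConsequence (Q : Set (LPRule α)) :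
    LM Q ⊆ ⋃ n, (immConsequence Q)^[n] ∅ := by
  refine LM_subset_of_immConsequence_subset ?_
  rintro _ ⟨r, hr, hpos, rfl⟩
  obtain ⟨n, hn⟩ := exists_iterate_immConsequence_of_subset_iUnion Q hpos
  refine Set.mem_iUnion.2 ⟨n + 1, ?_⟩
  rw [Function.iterate_succ_apply']
  exact ⟨r, hr, hn, rfl⟩

theorem exists_iterate_immConsequence_eq_LM {Q : Set (LPRule α)} {M : Finset α}
    (hM : LM Q = ↑M) : ∃ n, (immConsequence Q)^[n] ∅ = LM Q := by
  obtain ⟨n, hn⟩ := exists_iterate_immConsequence_of_subset_iUnion Q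
    (hM ▸ LM_subset_iUnion_iterate_immConsequence Q)
  exact ⟨n, (iterate_immConsequence_subset_LM Q n).antisymm (hM ▸ hn)⟩

theorem immConsequence_restrict {Q : Set (LPRule α)} {B X : Set α} (hX : X ⊆ B) :
    immConsequence {r ∈ Q | ↑r.pos ⊆ B} X = immConsequence Q X := by
  ext a
  constructor
  · rintro ⟨r, hr, hpos, rfl⟩
    exact ⟨r, hr.1, hpos, rfl⟩
  · rintro ⟨r, hr, hpos, rfl⟩
    exact ⟨r, ⟨hr, hpos.trans hX⟩, hpos, rfl⟩

theorem iterate_immConsequence_restrict {Q : Set (LPRule α)} {B : Set α} {m : ℕ}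
    (hm : (immConsequence Q)^[m] ∅ ⊆ B) :
    ∀ i ≤ m + 1, (immConsequence {r ∈ Q | ↑r.pos ⊆ B})^[i] ∅ = (immConsequence Q)^[i] ∅ := by
  intro i hi
  induction i with
  | zero => rfl
  | succ i ih =>
    have hiB : (immConsequence Q)^[i] ∅ ⊆ B :=
      (monotone_iterate_immConsequence Q (by omega : i ≤ m)).trans hm
    rw [Function.iterate_succ_apply', Function.iterate_succ_apply', ih (by omega),
      immConsequence_restrict hiB]

theorem exists_LM_subset_LM_restrict {Q : Set (LPRule α)} {M : Finset α} (hM : LM Q = ↑M)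
    (hne : M.Nonempty) : ∃ a ∈ M, LM Q ⊆ LM {r ∈ Q | ↑r.pos ⊆ (↑M : Set α) \ {a}} := by
  have hex := exists_iterate_immConsequence_eq_LM hM
  obtain ⟨m, hm⟩ : ∃ m, Nat.find hex = m + 1 := by
    refine Nat.exists_eq_add_one.2 (Nat.pos_of_ne_zero fun h0 => ?_)
    have h := Nat.find_spec hex
    rw [h0, hM] at h
    exact hne.ne_empty (Finset.coe_eq_empty.1 h.symm)
  have hlast : (immConsequence Q)^[m] ∅ ⊂ ↑M :=
    hM ▸ (iterate_immConsequence_subset_LM Q m).ssubset_of_ne (Nat.find_min hex (by omega))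
  obtain ⟨a, haM, ha⟩ := Set.exists_of_ssubset hlast
  refine ⟨a, haM, ?_⟩
  have hmB : (immConsequence Q)^[m] ∅ ⊆ (↑M : Set α) \ {a} :=
    fun b hb => ⟨hlast.subset hb, fun hba => ha (hba ▸ hb)⟩
  calc LM Q = (immConsequence Q)^[m + 1] ∅ := hm ▸ (Nat.find_spec hex).symm
    _ = (immConsequence {r ∈ Q | ↑r.pos ⊆ (↑M : Set α) \ {a}})^[m + 1] ∅ :=
      (iterate_immConsequence_restrict hmB (m + 1) le_rfl).symm
    _ ⊆ _ := iterate_immConsequence_subset_LM _ _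

theorem restrict_reduct_subset_reduct_progA {P : LProgram α} {A M : Set α} (hAM : A ⊆ M) :
    {r ∈ reduct P M | ↑r.pos ⊆ A} ⊆ reduct (progA P A) M := by
  rintro _ ⟨⟨r, ⟨hrP, hneg⟩, rfl⟩, hpos⟩
  refine ⟨r, ⟨Finset.mem_filter.2 ⟨hrP, hpos, ?_⟩, hneg⟩, rfl⟩
  exact Set.subset_empty_iff.1 (hneg ▸ Set.inter_subset_inter_right _ hAM)

end HornProgram

theorem LM_reduct_subset_atomsP (P : LProgram α) (S : Set α) :
    LM (reduct P S) ⊆ ↑(atomsP P) := by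
  refine LM_subset_of_immConsequence_subset ?_
  rintro _ ⟨_, ⟨r, ⟨hr, -⟩, rfl⟩, -, rfl⟩
  exact Finset.mem_coe.2 (Finset.mem_sup.2 ⟨r, hr, Finset.mem_insert_self _ _⟩)

theorem exists_isABased_erase_of_isStable {P : LProgram α} {M : Finset α}
    (hM : isStable P ↑M) (hne : M.Nonempty) : ∃ a ∈ M, isABased P ↑(M.erase a) ↑M := by
  obtain ⟨a, haM, hsub⟩ := exists_LM_subset_LM_restrict hM.symm hne
  refine ⟨a, haM, hM, a, by simp, by simp [haM], ?_⟩
  rw [Finset.coe_erase]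
  exact hM.le.trans (hsub.trans (LM_mono (restrict_reduct_subset_reduct_progA Set.sdiff_subset)))

theorem stable_card_iff_based_general (k : ℕ) (hk : 1 ≤ k) (P : LProgram α) :
    (∃ M : Finset α, M.card = k ∧ isStable P ↑M) ↔
      (∃ A : Finset α, A ⊆ atomsP P ∧ A.card = k - 1 ∧
        ∃ M : Set α, isABased P ↑A M) := by
  constructor
  · rintro ⟨M, rfl, hM⟩
    obtain ⟨a, haM, hbased⟩ := exists_isABased_erase_of_isStable hM (Finset.card_pos.1 hk)
    have hMatoms : M ⊆ atomsP P :=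
      Finset.coe_subset.1 (hM.le.trans (LM_reduct_subset_atomsP P _))
    exact ⟨M.erase a, (M.erase_subset a).trans hMatoms, Finset.card_erase_of_mem haM, _, hbased⟩
  · rintro ⟨A, -, hcard, M, hM, a, haA, rfl, -⟩
    refine ⟨insert a A, ?_, ?_⟩
    · rw [Finset.card_insert_of_notMem (by exact_mod_cast haA), hcard]
      omega
    · simpa [Set.union_singleton] using hM

/-- for `k ≥ 1`, a proper program `P` has a stable model of cardinality `k`
iff there exists `A ⊆ At(P)` with `|A| = k - 1` such that `P` has an `A`-based stable
model. -/
theorem stable_card_iff_based (k : ℕ) (hk : 1 ≤ k) (P : LProgram α)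
    (hP : ∀ r ∈ P, r.proper) :
    (∃ M : Finset α, M.card = k ∧ isStable P ↑M) ↔
      (∃ A : Finset α, A ⊆ atomsP P ∧ A.card = k - 1 ∧
        ∃ M : Set α, isABased P ↑A M) :=
  stable_card_iff_based_general k hk P
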